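/- Consider the Λ-system on a qutrit with γ1 = γ2 = 1, i.e. n = 3 with Lindblad terms V_1 = E_{21} and V_2 = E_{31}. Let e_1 = (1,0,0) ∈ Δ². Then conv{ −L_P e_1 : P a 3×3 permutation matrix } is the segment from (0,0,0) to (−2,1,1), and there exists U ∈ SU(3) such that −L_U e_1 does not lie in this segment. In particular, the Λ-system is not quasi-classical: derv(e_1) ⊄ conv{−L_P e_1 : P a permutation matrix}. -/

import Mathlib

open Matrix MeasureTheory
open scoped ComplexOrder

/-- The dissipator `Γ_V(ρ) = ½(V*Vρ + ρV*V) − VρV*`. -/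
noncomputable def dissipator {n : ℕ} (V ρ : Matrix (Fin n) (Fin n) ℂ) : Matrix (Fin n) (Fin n) ℂ :=
  (1 / 2 : ℂ) • (Vᴴ * V * ρ + ρ * (Vᴴ * V)) - V * ρ * Vᴴ

/-- `i·ad_H` as a linear map `ρ ↦ i[H,ρ]`. -/
noncomputable def iAd {n : ℕ} (H : Matrix (Fin n) (Fin n) ℂ) :
    Matrix (Fin n) (Fin n) ℂ →ₗ[ℂ] Matrix (Fin n) (Fin n) ℂ :=
  Complex.I • (LinearMap.mulLeft ℂ H - LinearMap.mulRight ℂ H)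

/-- The dissipator `Γ_V` as a linear map on matrices. -/
noncomputable def dissLin {n : ℕ} (V : Matrix (Fin n) (Fin n) ℂ) :
    Matrix (Fin n) (Fin n) ℂ →ₗ[ℂ] Matrix (Fin n) (Fin n) ℂ :=
  (1 / 2 : ℂ) • (LinearMap.mulLeft ℂ (Vᴴ * V) + LinearMap.mulRight ℂ (Vᴴ * V)) -
    (LinearMap.mulRight ℂ Vᴴ).comp (LinearMap.mulLeft ℂ V)

/-- Exponential of a linear endomorphism of the matrix space,
computed via its matrix representation in the standard basis. -/
noncomputable def expEnd {n : ℕ}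
    (A : Matrix (Fin n) (Fin n) ℂ →ₗ[ℂ] Matrix (Fin n) (Fin n) ℂ) :
    Matrix (Fin n) (Fin n) ℂ →ₗ[ℂ] Matrix (Fin n) (Fin n) ℂ :=
  Matrix.toLin (Matrix.stdBasis ℂ (Fin n) (Fin n)) (Matrix.stdBasis ℂ (Fin n) (Fin n))
    (NormedSpace.exp (LinearMap.toMatrix (Matrix.stdBasis ℂ (Fin n) (Fin n))
      (Matrix.stdBasis ℂ (Fin n) (Fin n)) A))

/-- `J(U)_{ij} = Σ_k |(U*V_kU)_{ij}|²`. -/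
noncomputable def Jmat {n r : ℕ} (V : Fin r → Matrix (Fin n) (Fin n) ℂ)
    (U : Matrix (Fin n) (Fin n) ℂ) : Matrix (Fin n) (Fin n) ℝ :=
  fun i j => ∑ k, ‖(Uᴴ * V k * U) i j‖ ^ 2

/-- The induced vector field `−L_U` applied to `λ`. -/
noncomputable def negL {n r : ℕ} (V : Fin r → Matrix (Fin n) (Fin n) ℂ)
    (U : Matrix (Fin n) (Fin n) ℂ) (lam : Fin n → ℝ) : Fin n → ℝ :=
  fun i => (∑ j, Jmat V U i j * lam j) - (∑ j, Jmat V U j i) * lam i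

/-- The set of achievable derivatives `derv(λ) = {−L_U λ : U ∈ SU(n)}`. -/
noncomputable def derv {n r : ℕ} (V : Fin r → Matrix (Fin n) (Fin n) ℂ)
    (lam : Fin n → ℝ) : Set (Fin n → ℝ) :=
  {w | ∃ U ∈ Matrix.specialUnitaryGroup (Fin n) ℂ, w = negL V U lam}

/-- The Λ-system on a qutrit with `γ₁ = γ₂ = 1`: Lindblad terms `V₁ = E₂₁`, `V₂ = E₃₁`. -/
noncomputable def LambdaTerms : Fin 2 → Matrix (Fin 3) (Fin 3) ℂ :=
  ![Matrix.single 1 0 1, Matrix.single 2 0 1]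

lemma conj_entry (M : Matrix (Fin 3) (Fin 3) ℂ) (a : Fin 3) (i j : Fin 3) :
    (Mᴴ * single a (0:Fin 3) (1:ℂ) * M) i j = (starRingEnd ℂ) (M a i) * M 0 j := by
  simp [Matrix.mul_apply, Matrix.single_apply, Matrix.conjTranspose_apply,
    Fin.sum_univ_three, Matrix.of_apply]
  fin_cases a <;> simp

lemma Jmat_lambda (M : Matrix (Fin 3) (Fin 3) ℂ) (i j : Fin 3) :
    Jmat LambdaTerms M i j =
      (‖M 1 i‖ ^ 2 + ‖M 2 i‖ ^ 2) * ‖M 0 j‖ ^ 2 := by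
  unfold Jmat LambdaTerms
  rw [Fin.sum_univ_two]
  simp only [Matrix.cons_val_zero, Matrix.cons_val_one, Matrix.head_cons, conj_entry,
    _root_.map_mul, norm_mul, Complex.norm_conj, mul_pow]
  ring

lemma negL_lambda (M : Matrix (Fin 3) (Fin 3) ℂ) (i : Fin 3) :
    negL LambdaTerms M ![1, 0, 0] i =
      (‖M 1 i‖ ^ 2 + ‖M 2 i‖ ^ 2) * ‖M 0 0‖ ^ 2
      - (((‖M 1 0‖ ^ 2 + ‖M 2 0‖ ^ 2)
        + (‖M 1 1‖ ^ 2 + ‖M 2 1‖ ^ 2)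
        + (‖M 1 2‖ ^ 2 + ‖M 2 2‖ ^ 2)) * ‖M 0 i‖ ^ 2)
        * (![1, 0, 0] : Fin 3 → ℝ) i := by
  simp only [negL, Jmat_lambda, Fin.sum_univ_three, Matrix.cons_val_zero,
    Matrix.cons_val_one, Matrix.head_cons, Matrix.cons_val_two, Matrix.tail_cons,
    mul_zero, mul_one, add_zero]
  ring

lemma perm_entry (π : Equiv.Perm (Fin 3)) (i j : Fin 3) :
    (π.permMatrix ℂ) i j = if π i = j then 1 else 0 := by
  simp [Equiv.Perm.permMatrix, PEquiv.toMatrix_apply, Equiv.toPEquiv_apply]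

lemma perm3 : ∀ π : Equiv.Perm (Fin 3),
    (π 0 = 0 ∧ π 1 = 1 ∧ π 2 = 2) ∨ (π 0 = 0 ∧ π 1 = 2 ∧ π 2 = 1) ∨
    (π 0 = 1 ∧ π 1 = 0 ∧ π 2 = 2) ∨ (π 0 = 1 ∧ π 1 = 2 ∧ π 2 = 0) ∨
    (π 0 = 2 ∧ π 1 = 0 ∧ π 2 = 1) ∨ (π 0 = 2 ∧ π 1 = 1 ∧ π 2 = 0) := by decide

lemma negL_perm (π : Equiv.Perm (Fin 3)) :
    negL LambdaTerms (π.permMatrix ℂ) ![1, 0, 0] = ![-2, 1, 1] ∨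
    negL LambdaTerms (π.permMatrix ℂ) ![1, 0, 0] = 0 := by
  rcases perm3 π with ⟨h0, h1, h2⟩ | ⟨h0, h1, h2⟩ | ⟨h0, h1, h2⟩ | ⟨h0, h1, h2⟩ |
    ⟨h0, h1, h2⟩ | ⟨h0, h1, h2⟩ <;>
  [left; left; right; right; right; right] <;>
  · funext i
    fin_cases i <;>
    · rw [negL_lambda]
      norm_num [perm_entry, Equiv.toPEquiv_apply, h0, h1, h2, Fin.ext_iff]

lemma negL_one : negL LambdaTerms ((1 : Equiv.Perm (Fin 3)).permMatrix ℂ) ![1, 0, 0] = ![-2, 1, 1] := by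
  funext i; fin_cases i <;> (rw [negL_lambda]; norm_num [perm_entry, Equiv.toPEquiv_apply, Fin.ext_iff])

lemma negL_swap : negL LambdaTerms ((Equiv.swap 0 1 : Equiv.Perm (Fin 3)).permMatrix ℂ) ![1, 0, 0] = 0 := by
  funext i; fin_cases i <;>
    (rw [negL_lambda]; norm_num [perm_entry, Equiv.toPEquiv_apply, Equiv.swap_apply_def, Fin.ext_iff])

lemma perm_set_eq : {w : Fin 3 → ℝ | ∃ π : Equiv.Perm (Fin 3),
    w = negL LambdaTerms (π.permMatrix ℂ) ![1, 0, 0]} = {(0 : Fin 3 → ℝ), ![-2, 1, 1]} := by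
  ext w
  constructor
  · rintro ⟨π, rfl⟩
    rcases negL_perm π with h | h <;> simp [h]
  · rintro (rfl | rfl)
    · exact ⟨Equiv.swap 0 1, negL_swap.symm⟩
    · exact ⟨1, negL_one.symm⟩

noncomputable def sq2 : ℝ := Real.sqrt 2 / 2

lemma sq2_mul : sq2 * sq2 = 1 / 2 := by
  have h : Real.sqrt 2 * Real.sqrt 2 = 2 := Real.mul_self_sqrt (by norm_num)
  unfold sq2; nlinarith

lemma sq2_nonneg : 0 ≤ sq2 := by unfold sq2; positivity

lemma sq2C : (sq2 : ℂ) * (sq2 : ℂ) = 1 / 2 := by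
  rw [← Complex.ofReal_mul, sq2_mul]; norm_num

noncomputable def Umat : Matrix (Fin 3) (Fin 3) ℂ :=
  !![(sq2 : ℂ), -(sq2 : ℂ), 0; (sq2 : ℂ), (sq2 : ℂ), 0; 0, 0, 1]

lemma Umat_mem : Umat ∈ Matrix.specialUnitaryGroup (Fin 3) ℂ := by
  rw [Matrix.mem_specialUnitaryGroup_iff]
  constructor
  · rw [Matrix.mem_unitaryGroup_iff']
    ext i j
    fin_cases i <;> fin_cases j <;>
      simp [Umat, Matrix.mul_apply, Fin.sum_univ_three, Matrix.one_apply, sq2C, mul_comm] <;>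
      ring_nf <;> simp [sq2C] <;> ring_nf <;>
      simp [← Complex.ofReal_mul, sq2_mul] <;> norm_num
  · have h2 : (sq2 : ℂ) ^ 2 = 1 / 2 := by rw [sq, sq2C]
    simp [Umat, Matrix.det_fin_three]
    ring_nf
    rw [h2]
    norm_num

lemma abs_sq2 : ‖(sq2 : ℂ)‖ ^ 2 = 1 / 2 := by
  rw [Complex.norm_real, Real.norm_of_nonneg sq2_nonneg, sq, sq2_mul]

lemma negL_Umat : negL LambdaTerms Umat ![1, 0, 0] = ![-(3 / 4), 1 / 4, 1 / 2] := by
  funext i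
  fin_cases i <;>
    (rw [negL_lambda]; norm_num [Umat, Matrix.cons_val_two, Matrix.tail_cons, Matrix.head_cons]; rw [show sq2 ^ 2 = 1/2 from by rw [sq, sq2_mul]]; try norm_num)

/-- For the Λ-system with `γ₁ = γ₂ = 1`, the convex hull of the
permutation-generated derivatives at `e₁` is the segment from `(0,0,0)` to `(−2,1,1)`,
yet some special unitary achieves a derivative outside this segment; in particular the
Λ-system is not quasi-classical at `e₁`. -/
theorem Lambda_system_not_quasi_classical :
    convexHull ℝ {w : Fin 3 → ℝ | ∃ π : Equiv.Perm (Fin 3),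
        w = negL LambdaTerms (π.permMatrix ℂ) ![1, 0, 0]}
      = segment ℝ (0 : Fin 3 → ℝ) ![-2, 1, 1] ∧
    (∃ U ∈ Matrix.specialUnitaryGroup (Fin 3) ℂ,
      negL LambdaTerms U ![1, 0, 0] ∉ segment ℝ (0 : Fin 3 → ℝ) ![-2, 1, 1]) ∧
    ¬ derv LambdaTerms ![1, 0, 0] ⊆
      convexHull ℝ {w : Fin 3 → ℝ | ∃ π : Equiv.Perm (Fin 3),
        w = negL LambdaTerms (π.permMatrix ℂ) ![1, 0, 0]} := by
  have hhull : convexHull ℝ {w : Fin 3 → ℝ | ∃ π : Equiv.Perm (Fin 3),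
      w = negL LambdaTerms (π.permMatrix ℂ) ![1, 0, 0]}
      = segment ℝ (0 : Fin 3 → ℝ) ![-2, 1, 1] := by
    rw [perm_set_eq, convexHull_pair]
  have hnot : negL LambdaTerms Umat ![1, 0, 0] ∉ segment ℝ (0 : Fin 3 → ℝ) ![-2, 1, 1] := by
    rw [negL_Umat]
    rintro ⟨a, b, ha, hb, hab, h⟩
    have h1 := congr_fun h 1
    have h2 := congr_fun h 2
    simp only [Pi.add_apply, Pi.smul_apply, Pi.zero_apply, smul_eq_mul, mul_zero,
      Matrix.cons_val_one, Matrix.head_cons, Matrix.cons_val_two, Matrix.tail_cons,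
      mul_one, zero_add] at h1 h2
    rw [h2] at h1
    norm_num at h1
  refine ⟨hhull, ⟨Umat, Umat_mem, hnot⟩, ?_⟩
  rw [hhull]
  intro hsub
  exact hnot (hsub ⟨Umat, Umat_mem, rfl⟩)
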